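/- Let s1 > 0, s2 > 0 and c ∈ (-1,1). Then for every x = (x1,x2,x3) ∈ ℝ³, the Legendre transform sup_{λ ∈ ℝ³, (λ1 s1², λ2 s2², λ3 s1 s2) ∈ D_c} ( λ1·x1 + λ2·x2 + λ3·x3 - P_c( λ1·s1², λ2·s2², λ3·s1·s2 ) ) equals P*_c( x1/s1², x2/s2², x3/(s1·s2) ), with both sides equal to +∞ whenever the conditions x1 > 0, x2 > 0, x1·x2 > x3² fail. In particular, the good rate function of the large deviation principle for the threshold realized (co-)volatility vector with constant volatilities σ1 = s1, σ2 = s2 and constant correlation ρ = c is I^𝒱_ldp(x1,x2,x3) = P*_c( x1/s1², x2/s2², x3/(s1·s2) ). -/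

import Mathlib

open MeasureTheory Real
open scoped Classical

noncomputable section

/-- The domain `D_c` of the log-moment generating function. -/
def Dc (c l1 l2 l3 : ℝ) : Prop :=
  max l1 l2 < 1 / (2 * (1 - c ^ 2)) ∧
    (l3 * (1 - c ^ 2) + c) ^ 2 < (1 - 2 * l1 * (1 - c ^ 2)) * (1 - 2 * l2 * (1 - c ^ 2))

/-- The function `P_c` on its domain `D_c`. -/
def Pc (c l1 l2 l3 : ℝ) : ℝ :=
  -(1 / 2) * Real.log
    (((1 - 2 * l1 * (1 - c ^ 2)) * (1 - 2 * l2 * (1 - c ^ 2)) -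
        (l3 * (1 - c ^ 2) + c) ^ 2) / (1 - c ^ 2))

/-- The Legendre transform `P*_c` of `P_c`, as an extended-real-valued function:
it is finite, with the explicit expression, exactly when `x₁ > 0`, `x₂ > 0` and
`x₁ x₂ > x₃²`, and equals `+∞` otherwise. -/
def PcStar (c x1 x2 x3 : ℝ) : EReal :=
  if 0 < x1 ∧ 0 < x2 ∧ x3 ^ 2 < x1 * x2 then
    ((Real.log (Real.sqrt (1 - c ^ 2) / Real.sqrt (x1 * x2 - x3 ^ 2)) - 1
        + (x1 + x2 - 2 * c * x3) / (2 * (1 - c ^ 2)) : ℝ) : EReal)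
  else ⊤

/-!
After the affine substitution `a = 1/(1-c²) - 2λ₁`, `b = 1/(1-c²) - 2λ₂`,
`d = λ₃ + c/(1-c²)`, the domain `D_c` becomes the cone of positive definite matrices
`M = [[a, d], [d, b]]`, and `λ·y - P_c(λ)` becomes an affine function of `y` plus
`(log det M - tr(M Y))/2`, where `Y = [[y₁, -y₃], [-y₃, y₂]]`. For positive definite `Y`,
AM-GM on the two eigenvalues of `M Y` gives `4 det M det Y ≤ tr(M Y)²`, and with
`log x ≤ x - 1` this yields `log det M - tr(M Y) ≤ -log det Y - 2`, with equality at
`M = Y⁻¹`. Otherwise some `v ≠ 0` has `vᵀ Y v ≤ 0`, and along `M = I + s vvᵀ` the determinant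
tends to `∞` while the trace stays bounded. The scaling by `s₁, s₂` is a linear change of
variables in `λ`.
-/

/-- Positive definiteness of the symmetric matrix `[[a, d], [d, b]]`. -/
def PosDef2 (a b d : ℝ) : Prop := 0 < a ∧ 0 < b ∧ d ^ 2 < a * b

section LogDetSubTrace

variable {a b d y1 y2 y3 : ℝ}

theorem PosDef2.trace_mul_pos (hM : PosDef2 a b d) (hY : PosDef2 y1 y2 y3) :
    0 < a * y1 + b * y2 - 2 * d * y3 := by
  obtain ⟨ha, hb, had⟩ := hM
  obtain ⟨hy1, hy2, hy⟩ := hY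
  have hprod : d ^ 2 * y3 ^ 2 < a * b * (y1 * y2) :=
    mul_lt_mul'' had hy (sq_nonneg d) (sq_nonneg y3)
  nlinarith [sq_nonneg (a * y1 - b * y2), mul_pos ha hy1, mul_pos hb hy2,
    sq_nonneg (a * y1 + b * y2 - 2 * d * y3)]

theorem four_mul_det_mul_det_le_sq_trace (hy : y3 ^ 2 < y1 * y2) :
    4 * ((a * b - d ^ 2) * (y1 * y2 - y3 ^ 2)) ≤ (a * y1 + b * y2 - 2 * d * y3) ^ 2 := by
  nlinarith [sq_nonneg (2 * y1 * y2 * d - y3 * (a * y1 + b * y2)),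
    mul_nonneg (sq_nonneg (a * y1 - b * y2)) (sub_pos.2 hy).le]

theorem log_det_sub_trace_le (hM : PosDef2 a b d) (hY : PosDef2 y1 y2 y3) :
    log (a * b - d ^ 2) - (a * y1 + b * y2 - 2 * d * y3) ≤ -log (y1 * y2 - y3 ^ 2) - 2 := by
  set L := a * y1 + b * y2 - 2 * d * y3
  have hL : 0 < L := hM.trace_mul_pos hY
  have hdetM : 0 < a * b - d ^ 2 := sub_pos.2 hM.2.2
  have hdetY : 0 < y1 * y2 - y3 ^ 2 := sub_pos.2 hY.2.2
  have hprod : log (a * b - d ^ 2) + log (y1 * y2 - y3 ^ 2) ≤ 2 * log (L / 2) := by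
    rw [← log_mul hdetM.ne' hdetY.ne', show 2 * log (L / 2) = log ((L / 2) ^ 2) by simp [log_pow]]
    refine log_le_log (by positivity) ?_
    linarith [four_mul_det_mul_det_le_sq_trace (a := a) (b := b) (d := d) hY.2.2]
  linarith [log_le_sub_one_of_pos (half_pos hL)]

theorem log_det_sub_trace_inv_eq (hΔ : y1 * y2 - y3 ^ 2 ≠ 0) :
    let Δ := y1 * y2 - y3 ^ 2
    log (y2 / Δ * (y1 / Δ) - (y3 / Δ) ^ 2) - (y2 / Δ * y1 + y1 / Δ * y2 - 2 * (y3 / Δ) * y3)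
      = -log (y1 * y2 - y3 ^ 2) - 2 := by
  intro Δ
  have hΔ' : Δ = y1 * y2 - y3 ^ 2 := rfl
  have hΔ0 : Δ ≠ 0 := hΔ
  have hdet : y2 / Δ * (y1 / Δ) - (y3 / Δ) ^ 2 = Δ⁻¹ := by field_simp; rw [hΔ']; ring
  have htrace : y2 / Δ * y1 + y1 / Δ * y2 - 2 * (y3 / Δ) * y3 = 2 := by
    field_simp; rw [hΔ']; ring
  rw [hdet, htrace, log_inv]

theorem PosDef2.inv (hY : PosDef2 y1 y2 y3) :
    let Δ := y1 * y2 - y3 ^ 2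
    PosDef2 (y2 / Δ) (y1 / Δ) (y3 / Δ) := by
  obtain ⟨hy1, hy2, hy⟩ := hY
  have hΔ : 0 < y1 * y2 - y3 ^ 2 := sub_pos.2 hy
  refine ⟨div_pos hy2 hΔ, div_pos hy1 hΔ, ?_⟩
  rw [div_pow, div_mul_div_comm, ← sq, mul_comm y2]
  exact div_lt_div_of_pos_right hy (by positivity)

theorem posDef2_div_iff {s1 s2 : ℝ} (hs1 : s1 ≠ 0) (hs2 : s2 ≠ 0) (x1 x2 x3 : ℝ) :
    PosDef2 (x1 / s1 ^ 2) (x2 / s2 ^ 2) (x3 / (s1 * s2)) ↔ PosDef2 x1 x2 x3 := by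
  have hs : 0 < (s1 * s2) ^ 2 := by positivity
  rw [PosDef2, PosDef2, div_pos_iff_of_pos_right (by positivity),
    div_pos_iff_of_pos_right (by positivity), div_mul_div_comm, ← mul_pow, div_pow,
    div_lt_div_iff_of_pos_right hs]

theorem exists_quadForm_nonpos_of_not_posDef2 (hY : ¬PosDef2 y1 y2 y3) :
    ∃ v1 v2 : ℝ, 0 < v1 ^ 2 + v2 ^ 2 ∧
      v1 ^ 2 * y1 + v2 ^ 2 * y2 + 2 * v1 * v2 * y3 ≤ 0 := by
  by_cases hy1 : 0 < y1
  · by_cases hy2 : 0 < y2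
    · have hy : y1 * y2 ≤ y3 ^ 2 := not_lt.1 fun hy => hY ⟨hy1, hy2, hy⟩
      exact ⟨-y3, y1, by positivity, by nlinarith⟩
    · exact ⟨0, 1, by norm_num, by linarith⟩
  · exact ⟨1, 0, by norm_num, by linarith⟩

theorem exists_log_det_sub_trace_gt (hY : ¬PosDef2 y1 y2 y3) (C : ℝ) :
    ∃ a b d : ℝ, PosDef2 a b d ∧
      C < log (a * b - d ^ 2) - (a * y1 + b * y2 - 2 * d * y3) := by
  obtain ⟨v1, v2, hv, hq⟩ := exists_quadForm_nonpos_of_not_posDef2 hY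
  set s := exp (C + y1 + y2) / (v1 ^ 2 + v2 ^ 2)
  have hs : 0 < s := by positivity
  have hdet : (1 + s * v1 ^ 2) * (1 + s * v2 ^ 2) - (-(s * v1 * v2)) ^ 2
      = 1 + exp (C + y1 + y2) := by
    simp only [s]; field_simp; ring
  have htrace : (1 + s * v1 ^ 2) * y1 + (1 + s * v2 ^ 2) * y2 - 2 * -(s * v1 * v2) * y3
      = y1 + y2 + s * (v1 ^ 2 * y1 + v2 ^ 2 * y2 + 2 * v1 * v2 * y3) := by ring
  have hlog : C + y1 + y2 < log (1 + exp (C + y1 + y2)) :=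
    (lt_log_iff_exp_lt (by positivity)).2 (lt_one_add _)
  refine ⟨1 + s * v1 ^ 2, 1 + s * v2 ^ 2, -(s * v1 * v2),
    ⟨by positivity, by positivity, by nlinarith [exp_pos (C + y1 + y2)]⟩, ?_⟩
  rw [hdet, htrace]
  nlinarith [mul_nonpos_of_nonneg_of_nonpos hs.le hq]

end LogDetSubTrace

section Legendre

variable {c : ℝ}

theorem dc_affine_iff (ht : 0 < 1 - c ^ 2) (a b d : ℝ) :
    Dc c ((1 / (1 - c ^ 2) - a) / 2) ((1 / (1 - c ^ 2) - b) / 2) (d - c / (1 - c ^ 2)) ↔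
      PosDef2 a b d := by
  set t := 1 - c ^ 2
  have hA : 1 - 2 * ((1 / t - a) / 2) * t = t * a := by field_simp; ring
  have hB : 1 - 2 * ((1 / t - b) / 2) * t = t * b := by field_simp; ring
  have hD : (d - c / t) * t + c = t * d := by field_simp; ring
  have hmax : ∀ x, (1 / t - x) / 2 < 1 / (2 * t) ↔ 0 < x := fun x => by
    rw [show 1 / (2 * t) = 1 / t / 2 by rw [div_div, mul_comm],
      div_lt_div_iff_of_pos_right two_pos, sub_lt_self_iff]
  have hdet : (t * d) ^ 2 < t * a * (t * b) ↔ d ^ 2 < a * b := by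
    rw [mul_pow, mul_mul_mul_comm, ← sq]; exact mul_lt_mul_iff_right₀ (by positivity)
  rw [Dc, max_lt_iff, hmax, hmax, hA, hB, hD, hdet, PosDef2, and_assoc]

theorem pc_objective_affine_eq (ht : 0 < 1 - c ^ 2) {a b d : ℝ} (hM : PosDef2 a b d)
    (y1 y2 y3 : ℝ) :
    (1 / (1 - c ^ 2) - a) / 2 * y1 + (1 / (1 - c ^ 2) - b) / 2 * y2 + (d - c / (1 - c ^ 2)) * y3
        - Pc c ((1 / (1 - c ^ 2) - a) / 2) ((1 / (1 - c ^ 2) - b) / 2) (d - c / (1 - c ^ 2))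
      = (y1 + y2 - 2 * c * y3) / (2 * (1 - c ^ 2))
        + (log (1 - c ^ 2) + (log (a * b - d ^ 2) - (a * y1 + b * y2 - 2 * d * y3))) / 2 := by
  set t := 1 - c ^ 2
  have hA : 1 - 2 * ((1 / t - a) / 2) * t = t * a := by field_simp; ring
  have hB : 1 - 2 * ((1 / t - b) / 2) * t = t * b := by field_simp; ring
  have hD : (d - c / t) * t + c = t * d := by field_simp; ring
  have hdet : (t * a * (t * b) - (t * d) ^ 2) / t = t * (a * b - d ^ 2) := by field_simp
  rw [Pc, hA, hB, hD, hdet, log_mul ht.ne' (sub_pos.2 hM.2.2).ne']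
  field_simp
  ring

theorem pcStar_of_posDef2 (ht : 0 < 1 - c ^ 2) {y1 y2 y3 : ℝ} (hY : PosDef2 y1 y2 y3) :
    PcStar c y1 y2 y3 = (((y1 + y2 - 2 * c * y3) / (2 * (1 - c ^ 2))
        + (log (1 - c ^ 2) + (-log (y1 * y2 - y3 ^ 2) - 2)) / 2 : ℝ) : EReal) := by
  have hΔ : 0 < y1 * y2 - y3 ^ 2 := sub_pos.2 hY.2.2
  rw [PcStar, if_pos (show 0 < y1 ∧ 0 < y2 ∧ y3 ^ 2 < y1 * y2 from hY),
    log_div (sqrt_pos.2 ht).ne' (sqrt_pos.2 hΔ).ne', log_sqrt ht.le, log_sqrt hΔ.le]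
  congr 1
  ring

theorem pcStar_of_not_posDef2 {y1 y2 y3 : ℝ} (hY : ¬PosDef2 y1 y2 y3) :
    PcStar c y1 y2 y3 = ⊤ :=
  if_neg hY

theorem pc_objective_le (ht : 0 < 1 - c ^ 2) {l1 l2 l3 y1 y2 y3 : ℝ} (hl : Dc c l1 l2 l3)
    (hY : PosDef2 y1 y2 y3) :
    l1 * y1 + l2 * y2 + l3 * y3 - Pc c l1 l2 l3 ≤ (y1 + y2 - 2 * c * y3) / (2 * (1 - c ^ 2))
        + (log (1 - c ^ 2) + (-log (y1 * y2 - y3 ^ 2) - 2)) / 2 := by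
  obtain ⟨a, rfl⟩ : ∃ a, l1 = (1 / (1 - c ^ 2) - a) / 2 :=
    ⟨1 / (1 - c ^ 2) - 2 * l1, by ring⟩
  obtain ⟨b, rfl⟩ : ∃ b, l2 = (1 / (1 - c ^ 2) - b) / 2 :=
    ⟨1 / (1 - c ^ 2) - 2 * l2, by ring⟩
  obtain ⟨d, rfl⟩ : ∃ d, l3 = d - c / (1 - c ^ 2) := ⟨l3 + c / (1 - c ^ 2), by ring⟩
  have hM := (dc_affine_iff ht a b d).1 hl
  rw [pc_objective_affine_eq ht hM]
  linarith [log_det_sub_trace_le hM hY]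

theorem iSup_pc_objective_eq_pcStar (hc : c ∈ Set.Ioo (-1 : ℝ) 1) (y1 y2 y3 : ℝ) :
    ⨆ m : ℝ × ℝ × ℝ, ⨆ _ : Dc c m.1 m.2.1 m.2.2,
        ((m.1 * y1 + m.2.1 * y2 + m.2.2 * y3 - Pc c m.1 m.2.1 m.2.2 : ℝ) : EReal)
      = PcStar c y1 y2 y3 := by
  have ht : 0 < 1 - c ^ 2 := by nlinarith [hc.1, hc.2]
  set t := 1 - c ^ 2
  by_cases hY : PosDef2 y1 y2 y3
  · rw [pcStar_of_posDef2 ht hY]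
    refine le_antisymm (iSup₂_le fun m hm => EReal.coe_le_coe_iff.2 (pc_objective_le ht hm hY)) ?_
    set Δ := y1 * y2 - y3 ^ 2
    refine le_iSup₂_of_le ((1 / t - y2 / Δ) / 2, (1 / t - y1 / Δ) / 2, y3 / Δ - c / t)
      ((dc_affine_iff ht _ _ _).2 hY.inv) (le_of_eq ?_)
    dsimp only
    rw [pc_objective_affine_eq ht hY.inv, log_det_sub_trace_inv_eq (sub_pos.2 hY.2.2).ne']
  · rw [pcStar_of_not_posDef2 hY, EReal.eq_top_iff_forall_lt]
    intro C
    obtain ⟨a, b, d, hM, hC⟩ := exists_log_det_sub_trace_gt hY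
      (2 * (C - (y1 + y2 - 2 * c * y3) / (2 * t)) - log t)
    refine (EReal.coe_lt_coe_iff.2 ?_).trans_le (le_iSup₂_of_le
      ((1 / t - a) / 2, (1 / t - b) / 2, d - c / t) ((dc_affine_iff ht a b d).2 hM) le_rfl)
    dsimp only
    rw [pc_objective_affine_eq ht hM]
    linarith

end Legendre

theorem iSup_scaled_pc_objective_eq_pcStar {c s1 s2 : ℝ} (hs1 : s1 ≠ 0) (hs2 : s2 ≠ 0)
    (hc : c ∈ Set.Ioo (-1 : ℝ) 1) (x1 x2 x3 : ℝ) :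
    ⨆ l ∈ {l : ℝ × ℝ × ℝ | Dc c (l.1 * s1 ^ 2) (l.2.1 * s2 ^ 2) (l.2.2 * (s1 * s2))},
        ((l.1 * x1 + l.2.1 * x2 + l.2.2 * x3
            - Pc c (l.1 * s1 ^ 2) (l.2.1 * s2 ^ 2) (l.2.2 * (s1 * s2)) : ℝ) : EReal)
      = PcStar c (x1 / s1 ^ 2) (x2 / s2 ^ 2) (x3 / (s1 * s2)) := by
  have hs1' : s1 ^ 2 ≠ 0 := by positivity
  have hs2' : s2 ^ 2 ≠ 0 := by positivity
  have hs12 : s1 * s2 ≠ 0 := mul_ne_zero hs1 hs2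
  let scale (l : ℝ × ℝ × ℝ) : ℝ × ℝ × ℝ :=
    (l.1 * s1 ^ 2, l.2.1 * s2 ^ 2, l.2.2 * (s1 * s2))
  have hscale : Function.Surjective scale := fun m =>
    ⟨(m.1 / s1 ^ 2, m.2.1 / s2 ^ 2, m.2.2 / (s1 * s2)), Prod.ext (div_mul_cancel₀ _ hs1')
      (Prod.ext (div_mul_cancel₀ _ hs2') (div_mul_cancel₀ _ hs12))⟩
  rw [← iSup_pc_objective_eq_pcStar hc]
  conv_rhs => rw [← hscale.iSup_comp]
  refine iSup_congr fun l => iSup_congr fun _ => ?_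
  congr 2
  simp only [scale]
  field_simp

/-- For constant volatilities `s₁, s₂ > 0` and constant correlation `c ∈ (-1,1)`, the
Legendre transform `sup_{λ : (λ₁ s₁², λ₂ s₂², λ₃ s₁ s₂) ∈ D_c} (⟨λ,x⟩ - P_c(λ₁ s₁², λ₂ s₂², λ₃ s₁ s₂))`
equals `P*_c(x₁/s₁², x₂/s₂², x₃/(s₁ s₂))`, both sides being `+∞` whenever the conditions
`x₁ > 0`, `x₂ > 0`, `x₁ x₂ > x₃²` fail. This is the good rate function `I^𝒱_ldp` of the LDP
for the threshold realized (co-)volatility vector in the constant-coefficient case. -/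
theorem legendre_transform_constant_coefficients
    (c s1 s2 : ℝ) (hs1 : 0 < s1) (hs2 : 0 < s2) (hc : c ∈ Set.Ioo (-1 : ℝ) 1)
    (x1 x2 x3 : ℝ) :
    (⨆ l ∈ {l : ℝ × ℝ × ℝ | Dc c (l.1 * s1 ^ 2) (l.2.1 * s2 ^ 2) (l.2.2 * (s1 * s2))},
        ((l.1 * x1 + l.2.1 * x2 + l.2.2 * x3
            - Pc c (l.1 * s1 ^ 2) (l.2.1 * s2 ^ 2) (l.2.2 * (s1 * s2)) : ℝ) : EReal))
      = PcStar c (x1 / s1 ^ 2) (x2 / s2 ^ 2) (x3 / (s1 * s2)) ∧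
    (¬ (0 < x1 ∧ 0 < x2 ∧ x3 ^ 2 < x1 * x2) →
      (⨆ l ∈ {l : ℝ × ℝ × ℝ | Dc c (l.1 * s1 ^ 2) (l.2.1 * s2 ^ 2) (l.2.2 * (s1 * s2))},
          ((l.1 * x1 + l.2.1 * x2 + l.2.2 * x3
              - Pc c (l.1 * s1 ^ 2) (l.2.1 * s2 ^ 2) (l.2.2 * (s1 * s2)) : ℝ) : EReal))
        = ⊤) := by
  have hsup := iSup_scaled_pc_objective_eq_pcStar hs1.ne' hs2.ne' hc x1 x2 x3
  refine ⟨hsup, fun hx => ?_⟩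
  rw [hsup, pcStar_of_not_posDef2]
  rwa [posDef2_div_iff hs1.ne' hs2.ne']
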